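/- Let S be a commutative p-scheme of order p^4 such that n_{O_θ(S)} = p^2 and n_{O^θ(S)} = p^3. Then the thin radical is contained in the thin residue: O_θ(S) ⊆ O^θ(S). -/

import Mathlib

open Set

/-- The diagonal relation `1_X` on a set `X`. -/
def schemeDiag (X : Type*) : Set (X × X) := {p | p.1 = p.2}

/-- The transpose `s*` of a relation `s`. -/
def schemeTransp {X : Type*} (s : Set (X × X)) : Set (X × X) := {p | (p.2, p.1) ∈ s}

/-- An association scheme on a finite set `X`: a partition of `X × X` containing the
diagonal, closed under transposition, with well-defined intersection numbers `a s t u`. -/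
structure AssocScheme (X : Type*) [Fintype X] where
  rels : Set (Set (X × X))
  partition : ∀ p : X × X, ∃! s, s ∈ rels ∧ p ∈ s
  diag_mem : schemeDiag X ∈ rels
  transpose_mem : ∀ s ∈ rels, schemeTransp s ∈ rels
  a : Set (X × X) → Set (X × X) → Set (X × X) → ℕ
  a_spec : ∀ s ∈ rels, ∀ t ∈ rels, ∀ u ∈ rels, ∀ x y : X, (x, y) ∈ u →
    a s t u = Nat.card {z : X | (x, z) ∈ s ∧ (z, y) ∈ t}

namespace AssocScheme

variable {X : Type*} [Fintype X] (S : AssocScheme X)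

/-- The valency `n_s = a_{s s* 1_X}` of a relation. -/
def val (s : Set (X × X)) : ℕ := S.a s (schemeTransp s) (schemeDiag X)

/-- The complex product `uv` of two relations. -/
def cprod (u v : Set (X × X)) : Set (Set (X × X)) := {s ∈ S.rels | S.a u v s ≠ 0}

/-- The complex product `PQ` of two sets of relations. -/
def sprod (P Q : Set (Set (X × X))) : Set (Set (X × X)) :=
  {s ∈ S.rels | ∃ p ∈ P, ∃ q ∈ Q, S.a p q s ≠ 0}

/-- A (nonempty) closed subset of the scheme. -/
def IsClosedSubset (T : Set (Set (X × X))) : Prop :=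
  T.Nonempty ∧ T ⊆ S.rels ∧ ∀ u ∈ T, ∀ v ∈ T, S.cprod u v ⊆ T

/-- The thin radical `O_θ(S)`: the set of relations of valency 1. -/
def thinRadical : Set (Set (X × X)) := {s ∈ S.rels | S.val s = 1}

/-- The smallest closed subset containing all `t* t` for `t ∈ T`. -/
def resOf (T : Set (Set (X × X))) : Set (Set (X × X)) :=
  ⋂₀ {U | S.IsClosedSubset U ∧ ∀ t ∈ T, S.cprod (schemeTransp t) t ⊆ U}

/-- The thin residue `O^θ(S) = ⟨⋃_{s ∈ S} s* s⟩`. -/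
def thinResidue : Set (Set (X × X)) := S.resOf S.rels

/-- The order `n_U = ∑_{u ∈ U} n_u` of a set of relations. -/
noncomputable def nOrd (U : Set (Set (X × X))) : ℕ := ∑ᶠ u ∈ U, S.val u

/-- Commutativity of the scheme. -/
def IsCommutative : Prop :=
  ∀ u ∈ S.rels, ∀ v ∈ S.rels, ∀ w ∈ S.rels, S.a u v w = S.a v u w

/-- `S` is a `p`-scheme: `|X|` and all valencies are powers of the prime `p`. -/
def IsPScheme (p : ℕ) : Prop :=
  p.Prime ∧ (∃ n, Fintype.card X = p ^ n) ∧ ∀ s ∈ S.rels, ∃ i, S.val s = p ^ i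

/-- `S` is schurian: its relations are the orbitals of a transitive permutation group. -/
def IsSchurian : Prop :=
  ∃ G : Subgroup (Equiv.Perm X), (∀ x y : X, ∃ g ∈ G, g x = y) ∧
    S.rels = {o | ∃ q : X × X, o = {r : X × X | ∃ g ∈ G, (g q.1, g q.2) = r}}

/-- The right stabilizer `R(s) = {t | st = s}`. -/
def Rstab (s : Set (X × X)) : Set (Set (X × X)) := {t ∈ S.rels | S.cprod s t = {s}}

/-- The left stabilizer `L(s) = {t | ts = s}`. -/
def Lstab (s : Set (X × X)) : Set (Set (X × X)) := {t ∈ S.rels | S.cprod t s = {s}}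

/-- A faithful map: `r(x,y) = r(φ x, φ y)` for all `x, y`. -/
def IsFaithful (φ : X → X) : Prop :=
  ∀ x y : X, ∀ s ∈ S.rels, (x, y) ∈ s → (φ x, φ y) ∈ s

/-- An automorphism of the scheme. -/
def IsAutomorphism (φ : X → X) : Prop := Function.Bijective φ ∧ S.IsFaithful φ

/-- The quotient scheme `S // T` is isomorphic to the cyclic group `C_m`:
there is a surjection `f : X → ZMod m` whose difference map classifies the
double-coset relations `T s T`. -/
def QuotIsoCyclic (T : Set (Set (X × X))) (m : ℕ) : Prop :=
  ∃ f : X → ZMod m, Function.Surjective f ∧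
    ∀ x y x' y' : X, (f y - f x = f y' - f x') ↔
      ∃ s ∈ S.rels, (x, y) ∈ s ∧ ∃ s' ∈ S.sprod (S.sprod T {s}) T, (x', y') ∈ s'

/-- A thin closed subset `T` is isomorphic, as a group under the relational
product, to the additive group `G`. -/
def ThinGroupIso (T : Set (Set (X × X))) (G : Type*) [AddGroup G] : Prop :=
  (∀ t ∈ T, S.val t = 1) ∧ ∃ f : Set (X × X) → G, Set.BijOn f T Set.univ ∧
    ∀ t1 ∈ T, ∀ t2 ∈ T, ∀ u, S.cprod t1 t2 = {u} → f u = f t1 + f t2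

end AssocScheme

/-- The set of relations of the wreath product `F ≀ H`. -/
def wreathRels {W Y : Type*} [Fintype W] [Fintype Y]
    (F : AssocScheme W) (H : AssocScheme Y) : Set (Set ((W × Y) × (W × Y))) :=
  {r | ∃ f ∈ F.rels, r = {p : (W × Y) × (W × Y) | p.1.2 = p.2.2 ∧ (p.1.1, p.2.1) ∈ f}} ∪
  {r | ∃ h ∈ H.rels, h ≠ schemeDiag Y ∧
    r = {p : (W × Y) × (W × Y) | (p.1.2, p.2.2) ∈ h}}

/-!
Suppose a thin relation `s` lies outside `T = O^θ(S)`. As `n_T = p³` and `|X| = p⁴`, the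
relation `x ~ y ↔ r(x, y) ∈ T` has `p` classes. In a commutative scheme a thin relation is an
automorphism `σ`, and whether `σⁿ` fixes the class of `x` depends only on whether `sⁿ ∈ T`; so
`σ` permutes the `p` classes transitively. Hence every relation `u` lies in `sⁿ t` for some
`t ∈ T`, every constituent of `u* u` is one of `t* t`, and `T` is generated by the `t* t`,
`t ∈ T`, i.e. `O^θ(T) = T`. This is impossible in a commutative `p`-scheme, where
`O^θ(V) ⊊ V` for every closed `V` with `n_V > 1`: by counting valencies mod `p` the thin part
`N` of `V` is nontrivial, and induction on `|X|` applies to the quotient scheme `S // N`.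
-/

theorem MulAction.isPretransitive_of_free_of_prime_card {G α : Type*} [Group G] [Finite G]
    [MulAction G α] [Finite α] (hα : (Nat.card α).Prime) [Nontrivial G]
    (hfree : ∀ (g : G) (a : α), g • a = a → g = 1) : MulAction.IsPretransitive G α := by
  classical
  have : Fintype G := Fintype.ofFinite G
  have : Fintype α := Fintype.ofFinite α
  have hstab (a : α) : Fintype.card (MulAction.stabilizer G a) = 1 :=
    Fintype.card_eq_one_iff.2 ⟨1, fun ⟨g, hg⟩ => Subtype.ext (hfree g a hg)⟩
  have hclass := MulAction.card_eq_sum_card_group_div_card_stabilizer G α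
  simp only [hstab, Nat.div_one, Finset.sum_const, Finset.card_univ, smul_eq_mul,
    ← Nat.card_eq_fintype_card] at hclass
  rw [MulAction.pretransitive_iff_subsingleton_quotient, ← Finite.card_le_one_iff_subsingleton]
  rcases Nat.prime_mul_iff.1 (hclass ▸ hα) with h | h
  · exact absurd h.2 Finite.one_lt_card.ne'
  · exact h.2.le

theorem Equiv.Perm.exists_pow_apply_eq_of_prime_card {α : Type*} [Finite α]
    (hα : (Nat.card α).Prime) {σ : Equiv.Perm α} (hσ : σ ≠ 1)
    (hfree : ∀ (n : ℕ) (a : α), (σ ^ n) a = a → σ ^ n = 1) (a b : α) :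
    ∃ n : ℕ, (σ ^ n) a = b := by
  have : Nontrivial (Subgroup.zpowers σ) :=
    ⟨⟨1, ⟨σ, Subgroup.mem_zpowers σ⟩, fun h => hσ (congrArg Subtype.val h).symm⟩⟩
  have := MulAction.isPretransitive_of_free_of_prime_card (G := Subgroup.zpowers σ) hα
    (by
      rintro ⟨g, hg⟩ c hc
      obtain ⟨n, rfl⟩ := mem_powers_iff_mem_zpowers.2 hg
      exact Subtype.ext (hfree n c hc))
  obtain ⟨⟨g, hg⟩, hgab⟩ := MulAction.exists_smul_eq (Subgroup.zpowers σ) a b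
  obtain ⟨n, rfl⟩ := mem_powers_iff_mem_zpowers.2 hg
  exact ⟨n, hgab⟩

theorem Setoid.ncard_eq_mul_ncard_image {α : Type*} [Finite α] (r : Setoid α) {Z : Set α}
    {k : ℕ} (hk : ∀ z ∈ Z, {z' ∈ Z | r z z'}.ncard = k) :
    Z.ncard = k * (Quotient.mk r '' Z).ncard := by
  have hZ : Z = ⋃ c ∈ Quotient.mk r '' Z, {z ∈ Z | Quotient.mk r z = c} := by
    ext z
    simp only [Set.mem_iUnion, Set.mem_image, Set.mem_ofPred_eq]
    exact ⟨fun hz => ⟨_, ⟨z, hz, rfl⟩, hz, rfl⟩, fun ⟨_, _, hz, _⟩ => hz⟩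
  have hdisj : (Quotient.mk r '' Z).PairwiseDisjoint fun c => {z ∈ Z | Quotient.mk r z = c} :=
    fun c _ c' _ hcc' => Set.disjoint_left.2 fun z hz hz' => hcc' (hz.2.symm.trans hz'.2)
  have hfib : ∀ c ∈ Quotient.mk r '' Z, {z ∈ Z | Quotient.mk r z = c}.ncard = k := by
    rintro _ ⟨z, hz, rfl⟩
    rw [← hk z hz]
    congr 1
    ext z'
    exact and_congr_right fun _ => Quotient.eq.trans ⟨r.symm, r.symm⟩
  conv_lhs => rw [hZ]
  rw [Set.Finite.ncard_biUnion (Set.toFinite _) (fun _ _ => Set.toFinite _) hdisj,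
    finsum_mem_congr rfl hfib, ← finsum_one, mul_finsum_mem' _ _ (Set.toFinite _), mul_one]

open SetRel

namespace AssocScheme

section Relations

variable {X : Type*}

open Classical in
noncomputable def thinMap (s : Set (X × X)) (x : X) : X :=
  if h : ∃ y, (x, y) ∈ s then h.choose else x

def relPow (s : Set (X × X)) : ℕ → Set (X × X)
  | 0 => schemeDiag X
  | n + 1 => relPow s n ○ s

lemma relPow_one (s : Set (X × X)) : relPow s 1 = s := id_comp s

end Relations

variable {X : Type*} [Fintype X] (S : AssocScheme X)

noncomputable def relOf (x y : X) : Set (X × X) := (S.partition (x, y)).exists.choose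

lemma relOf_mem (x y : X) : S.relOf x y ∈ S.rels := (S.partition (x, y)).exists.choose_spec.1

lemma mem_relOf (x y : X) : (x, y) ∈ S.relOf x y := (S.partition (x, y)).exists.choose_spec.2

def IsThin (s : Set (X × X)) : Prop := s ∈ S.rels ∧ S.val s = 1

variable {S} {T : Set (Set (X × X))}

lemma eq_of_mem_of_mem {s t : Set (X × X)} {x y : X} (hs : s ∈ S.rels) (ht : t ∈ S.rels)
    (hxs : (x, y) ∈ s) (hxt : (x, y) ∈ t) : s = t :=
  (S.partition (x, y)).unique ⟨hs, hxs⟩ ⟨ht, hxt⟩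

lemma eq_relOf {s : Set (X × X)} {x y : X} (hs : s ∈ S.rels) (h : (x, y) ∈ s) :
    s = S.relOf x y :=
  eq_of_mem_of_mem hs (S.relOf_mem x y) h (S.mem_relOf x y)

lemma a_eq_ncard {s t u : Set (X × X)} (hs : s ∈ S.rels) (ht : t ∈ S.rels) (hu : u ∈ S.rels)
    {x y : X} (hxy : (x, y) ∈ u) : S.a s t u = {z | (x, z) ∈ s ∧ (z, y) ∈ t}.ncard := by
  rw [S.a_spec s hs t ht u hu x y hxy, Nat.card_coe_set_eq]

lemma val_eq_ncard {s : Set (X × X)} (hs : s ∈ S.rels) (x : X) :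
    S.val s = {y | (x, y) ∈ s}.ncard := by
  rw [val, a_eq_ncard hs (S.transpose_mem s hs) S.diag_mem (show (x, x) ∈ schemeDiag X from rfl)]
  simp [schemeTransp]

lemma mem_cprod {s t w : Set (X × X)} (hs : s ∈ S.rels) (ht : t ∈ S.rels) (hw : w ∈ S.rels)
    {x y z : X} (hxy : (x, y) ∈ w) (hxz : (x, z) ∈ s) (hzy : (z, y) ∈ t) :
    w ∈ S.cprod s t := by
  refine ⟨hw, ?_⟩
  rw [a_eq_ncard hs ht hw hxy]
  exact ((Set.ncard_pos (Set.toFinite _)).2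
    ⟨z, show z ∈ {z | (x, z) ∈ s ∧ (z, y) ∈ t} from ⟨hxz, hzy⟩⟩).ne'

lemma relOf_mem_cprod {s t : Set (X × X)} (hs : s ∈ S.rels) (ht : t ∈ S.rels) {x y z : X}
    (hxz : (x, z) ∈ s) (hzy : (z, y) ∈ t) : S.relOf x y ∈ S.cprod s t :=
  mem_cprod hs ht (S.relOf_mem x y) (S.mem_relOf x y) hxz hzy

lemma exists_of_mem_cprod {s t w : Set (X × X)} (hs : s ∈ S.rels) (ht : t ∈ S.rels)
    (hw : w ∈ S.cprod s t) {x y : X} (hxy : (x, y) ∈ w) : ∃ z, (x, z) ∈ s ∧ (z, y) ∈ t := by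
  have := hw.2
  rwa [a_eq_ncard hs ht hw.1 hxy, Ne, Set.ncard_eq_zero, ← Ne,
    ← Set.nonempty_iff_ne_empty] at this

lemma subset_comp_of_mem_cprod {s t w : Set (X × X)} (hs : s ∈ S.rels) (ht : t ∈ S.rels)
    (hw : w ∈ S.cprod s t) : w ⊆ s ○ t :=
  fun _ hxy => exists_of_mem_cprod hs ht hw hxy

lemma IsCommutative.cprod_comm (hcomm : S.IsCommutative) {s t : Set (X × X)}
    (hs : s ∈ S.rels) (ht : t ∈ S.rels) : S.cprod s t = S.cprod t s := by
  ext u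
  exact and_congr_right fun hu => by rw [hcomm s hs t ht u hu]

/- `AssocScheme` allows `∅` as a relation; under `∅ ∉ S.rels` (true for `p`-schemes, see
`IsPScheme.empty_notMem`) every relation is regular of positive valency. -/

lemma nonempty_of_mem_rels (h0 : ∅ ∉ S.rels) {s : Set (X × X)} (hs : s ∈ S.rels) :
    s.Nonempty :=
  Set.nonempty_iff_ne_empty.2 fun he => h0 (he ▸ hs)

lemma nonempty_of_empty_notMem (h0 : ∅ ∉ S.rels) : Nonempty X :=
  let ⟨⟨x, _⟩, _⟩ := nonempty_of_mem_rels h0 S.diag_mem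
  ⟨x⟩

lemma val_pos (h0 : ∅ ∉ S.rels) {s : Set (X × X)} (hs : s ∈ S.rels) : 0 < S.val s := by
  obtain ⟨⟨x, y⟩, hxy⟩ := nonempty_of_mem_rels h0 hs
  rw [val_eq_ncard hs x]
  exact (Set.ncard_pos (Set.toFinite _)).2 ⟨y, hxy⟩

lemma exists_mem_of_mem_rels (h0 : ∅ ∉ S.rels) {s : Set (X × X)} (hs : s ∈ S.rels) (x : X) :
    ∃ y, (x, y) ∈ s := by
  have := val_pos h0 hs
  rw [val_eq_ncard hs x] at this
  exact (Set.ncard_pos (Set.toFinite _)).1 this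

lemma IsPScheme.empty_notMem {p : ℕ} (hp : S.IsPScheme p) : ∅ ∉ S.rels := by
  intro h
  obtain ⟨n, hn⟩ := hp.2.1
  obtain ⟨x⟩ : Nonempty X := Fintype.card_pos_iff.1 (hn ▸ pow_pos hp.1.pos n)
  obtain ⟨i, hi⟩ := hp.2.2 ∅ h
  rw [val_eq_ncard h x] at hi
  simp [(pow_pos hp.1.pos i).ne] at hi

lemma isThin_diag (h0 : ∅ ∉ S.rels) : S.IsThin (schemeDiag X) := by
  obtain ⟨x⟩ := nonempty_of_empty_notMem h0
  refine ⟨S.diag_mem, ?_⟩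
  rw [val_eq_ncard S.diag_mem x]
  simp [schemeDiag]

namespace IsThin

variable {s t : Set (X × X)}

lemma eq_of_mem (ht : S.IsThin t) {x y y' : X} (hy : (x, y) ∈ t) (hy' : (x, y') ∈ t) :
    y = y' :=
  (Set.ncard_le_one_iff (Set.toFinite _)).1 ((val_eq_ncard ht.1 x).symm.trans ht.2).le hy hy'

lemma mem_thinMap (h0 : ∅ ∉ S.rels) (ht : S.IsThin t) (x : X) : (x, thinMap t x) ∈ t := by
  have he := exists_mem_of_mem_rels h0 ht.1 x
  rw [thinMap, dif_pos he]
  exact he.choose_spec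

lemma mem_iff (h0 : ∅ ∉ S.rels) (ht : S.IsThin t) {x y : X} : (x, y) ∈ t ↔ thinMap t x = y :=
  ⟨fun h => ht.eq_of_mem (ht.mem_thinMap h0 x) h, fun h => h ▸ ht.mem_thinMap h0 x⟩

lemma bijective_thinMap (h0 : ∅ ∉ S.rels) (ht : S.IsThin t) : Function.Bijective (thinMap t) :=
  Finite.surjective_iff_bijective.1 fun y =>
    let ⟨x, hx⟩ := exists_mem_of_mem_rels h0 (S.transpose_mem t ht.1) y
    ⟨x, (ht.mem_iff h0).1 hx⟩

lemma transp (h0 : ∅ ∉ S.rels) (ht : S.IsThin t) : S.IsThin (schemeTransp t) := by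
  obtain ⟨x⟩ := nonempty_of_empty_notMem h0
  obtain ⟨y, rfl⟩ := (ht.bijective_thinMap h0).2 x
  refine ⟨S.transpose_mem t ht.1, ?_⟩
  rw [val_eq_ncard (S.transpose_mem t ht.1) (thinMap t y), ← Set.ncard_singleton y]
  congr 1
  ext z
  simp only [schemeTransp, Set.mem_ofPred_eq, Set.mem_singleton_iff, ht.mem_iff h0]
  exact (ht.bijective_thinMap h0).1.eq_iff

lemma ncard_comp (h0 : ∅ ∉ S.rels) (hs : s ∈ S.rels) (ht : S.IsThin t) (x : X) :
    {y | (x, y) ∈ s ○ t}.ncard = S.val s := by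
  have : {y | (x, y) ∈ s ○ t} = thinMap t '' {y | (x, y) ∈ s} := by
    ext y
    simp [ht.mem_iff h0]
  rw [this, Set.ncard_image_of_injective _ (ht.bijective_thinMap h0).1, val_eq_ncard hs x]

lemma cprod_eq_singleton_comp (h0 : ∅ ∉ S.rels) (hs : s ∈ S.rels) (ht : S.IsThin t) :
    S.cprod s t = {s ○ t} := by
  have key : ∀ w ∈ S.cprod s t, w = s ○ t := by
    intro w hw
    have hsub := subset_comp_of_mem_cprod hs ht.1 hw
    refine hsub.antisymm fun ⟨x, y⟩ hxy => ?_
    obtain ⟨⟨x₀, y₀⟩, hw₀⟩ := nonempty_of_mem_rels h0 hw.1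
    obtain ⟨z₀, hs₀, ht₀⟩ := exists_of_mem_cprod hs ht.1 hw hw₀
    have hs_sub : s ⊆ w ○ schemeTransp t := subset_comp_of_mem_cprod hw.1
      (S.transpose_mem t ht.1) (mem_cprod hw.1 (S.transpose_mem t ht.1) hs hs₀ hw₀ ht₀)
    -- `s ⊆ w ○ t*` gives `n_s ≤ n_w`, so the rows of `w ⊆ s ○ t` are equal
    have hnbhd : {y | (x, y) ∈ w} = {y | (x, y) ∈ s ○ t} := by
      refine Set.eq_of_subset_of_ncard_le (fun y hy => hsub hy) ?_ (Set.toFinite _)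
      rw [ht.ncard_comp h0 hs, val_eq_ncard hs x, ← val_eq_ncard hw.1 x,
        ← (ht.transp h0).ncard_comp h0 hw.1 x]
      exact Set.ncard_le_ncard (fun y hy => hs_sub hy) (Set.toFinite _)
    exact (Set.ext_iff.1 hnbhd y).2 hxy
  obtain ⟨⟨x, z⟩, hxz⟩ := nonempty_of_mem_rels h0 hs
  have hmem := relOf_mem_cprod hs ht.1 hxz (ht.mem_thinMap h0 z)
  rw [key _ hmem] at hmem
  exact Set.eq_singleton_iff_unique_mem.2 ⟨hmem, key⟩

lemma comp_mem_cprod (h0 : ∅ ∉ S.rels) (hs : s ∈ S.rels) (ht : S.IsThin t) :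
    s ○ t ∈ S.cprod s t := by
  rw [ht.cprod_eq_singleton_comp h0 hs]
  rfl

lemma comp_mem_rels (h0 : ∅ ∉ S.rels) (hs : s ∈ S.rels) (ht : S.IsThin t) : s ○ t ∈ S.rels :=
  (ht.comp_mem_cprod h0 hs).1

lemma comp (h0 : ∅ ∉ S.rels) (hs : S.IsThin s) (ht : S.IsThin t) : S.IsThin (s ○ t) := by
  obtain ⟨x⟩ := nonempty_of_empty_notMem h0
  refine ⟨ht.comp_mem_rels h0 hs.1, ?_⟩
  rw [val_eq_ncard (ht.comp_mem_rels h0 hs.1) x, ht.ncard_comp h0 hs.1, hs.2]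

lemma transp_comp_self (h0 : ∅ ∉ S.rels) (ht : S.IsThin t) :
    schemeTransp t ○ t = schemeDiag X := by
  ext ⟨x, y⟩
  refine ⟨fun ⟨z, hzx, hzy⟩ => ht.eq_of_mem hzx hzy, fun (hxy : x = y) => ?_⟩
  obtain ⟨z, rfl⟩ := (ht.bijective_thinMap h0).2 x
  exact ⟨z, ht.mem_thinMap h0 z, hxy ▸ ht.mem_thinMap h0 z⟩

lemma comp_comm (h0 : ∅ ∉ S.rels) (hcomm : S.IsCommutative) (hs : s ∈ S.rels)
    (ht : S.IsThin t) : t ○ s = s ○ t := by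
  have hcprod : S.cprod t s = {s ○ t} := by
    rw [hcomm.cprod_comm ht.1 hs, ht.cprod_eq_singleton_comp h0 hs]
  refine Set.Subset.antisymm (fun ⟨x, y⟩ ⟨z, hxz, hzy⟩ => ?_) ?_
  · have := relOf_mem_cprod ht.1 hs hxz hzy
    rw [hcprod, Set.mem_singleton_iff] at this
    exact this ▸ S.mem_relOf x y
  · exact subset_comp_of_mem_cprod ht.1 hs (hcprod ▸ rfl)

lemma map_mem_of_mem (h0 : ∅ ∉ S.rels) (hcomm : S.IsCommutative) (ht : S.IsThin t)
    {r : Set (X × X)} (hr : r ∈ S.rels) {x y : X} (hxy : (x, y) ∈ r) :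
    (thinMap t x, thinMap t y) ∈ r := by
  have : schemeTransp t ○ (r ○ t) = r := by
    rw [← ht.comp_comm h0 hcomm hr, ← comp_assoc, ht.transp_comp_self h0]
    exact id_comp r
  rw [← this]
  exact ⟨x, ht.mem_thinMap h0 x, y, hxy, ht.mem_thinMap h0 y⟩

lemma pow (h0 : ∅ ∉ S.rels) (hs : S.IsThin s) : ∀ n, S.IsThin (relPow s n)
  | 0 => isThin_diag h0
  | n + 1 => (hs.pow h0 n).comp h0 hs

lemma mem_relPow (h0 : ∅ ∉ S.rels) (hs : S.IsThin s) (x : X) :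
    ∀ n, (x, (thinMap s)^[n] x) ∈ AssocScheme.relPow s n
  | 0 => rfl
  | n + 1 => by
    rw [Function.iterate_succ_apply']
    exact ⟨_, hs.mem_relPow h0 x n, hs.mem_thinMap h0 _⟩

end IsThin

variable (S) in
structure IsSymClosed (T : Set (Set (X × X))) : Prop where
  subset_rels : T ⊆ S.rels
  diag_mem : schemeDiag X ∈ T
  transp_mem : ∀ t ∈ T, schemeTransp t ∈ T
  cprod_subset : ∀ u ∈ T, ∀ v ∈ T, S.cprod u v ⊆ T

lemma IsSymClosed.isClosedSubset (hT : S.IsSymClosed T) : S.IsClosedSubset T :=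
  ⟨⟨_, hT.diag_mem⟩, hT.subset_rels, hT.cprod_subset⟩

lemma isSymClosed_singleton_diag (h0 : ∅ ∉ S.rels) : S.IsSymClosed {schemeDiag X} where
  subset_rels := Set.singleton_subset_iff.2 S.diag_mem
  diag_mem := rfl
  transp_mem := by
    rintro _ rfl
    ext ⟨x, y⟩
    exact eq_comm
  cprod_subset := by
    rintro u rfl v rfl w hw
    obtain ⟨⟨x, y⟩, hxy⟩ := nonempty_of_mem_rels h0 hw.1
    obtain ⟨z, hxz, hzy⟩ := exists_of_mem_cprod S.diag_mem S.diag_mem hw hxy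
    exact eq_of_mem_of_mem hw.1 S.diag_mem hxy (show x = y from hxz.trans hzy)

def IsSymClosed.setoid (hT : S.IsSymClosed T) : Setoid X where
  r x y := S.relOf x y ∈ T
  iseqv.refl x := eq_relOf S.diag_mem (show (x, x) ∈ schemeDiag X from rfl) ▸ hT.diag_mem
  iseqv.symm {x y} h :=
    eq_relOf (S.transpose_mem _ (S.relOf_mem x y)) (S.mem_relOf x y) ▸ hT.transp_mem _ h
  iseqv.trans h₁ h₂ := hT.cprod_subset _ h₁ _ h₂
    (relOf_mem_cprod (S.relOf_mem _ _) (S.relOf_mem _ _) (S.mem_relOf _ _) (S.mem_relOf _ _))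

lemma IsSymClosed.setoid_iff (hT : S.IsSymClosed T) {x y : X} :
    hT.setoid x y ↔ ∃ t ∈ T, (x, y) ∈ t :=
  ⟨fun h => ⟨_, h, S.mem_relOf x y⟩,
    fun ⟨_, ht, hxy⟩ => (eq_relOf (hT.subset_rels ht) hxy ▸ ht : S.relOf x y ∈ T)⟩

lemma IsSymClosed.mk_eq_mk_iff (hT : S.IsSymClosed T) {x y : X} :
    Quotient.mk hT.setoid x = Quotient.mk hT.setoid y ↔ ∃ t ∈ T, (x, y) ∈ t :=
  Quotient.eq.trans hT.setoid_iff

lemma ncard_relOf_mem (hT : T ⊆ S.rels) (x : X) :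
    {y | S.relOf x y ∈ T}.ncard = S.nOrd T := by
  have hcover : {y | S.relOf x y ∈ T} = ⋃ t ∈ T, {y | (x, y) ∈ t} := by
    ext y
    simp only [Set.mem_iUnion, Set.mem_ofPred_eq, exists_prop]
    exact ⟨fun h => ⟨_, h, S.mem_relOf x y⟩, fun ⟨t, ht, hxy⟩ => eq_relOf (hT ht) hxy ▸ ht⟩
  have hdisj : T.PairwiseDisjoint fun t => {y | (x, y) ∈ t} := fun t ht t' ht' htt' =>
    Set.disjoint_left.2 fun y hy hy' => htt' (eq_of_mem_of_mem (hT ht) (hT ht') hy hy')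
  rw [hcover, Set.Finite.ncard_biUnion (Set.toFinite _) (fun _ _ => Set.toFinite _) hdisj, nOrd]
  exact finsum_mem_congr rfl fun t ht => (val_eq_ncard (hT ht) x).symm

lemma IsSymClosed.card_eq_nOrd_mul (hT : S.IsSymClosed T) :
    Nat.card X = S.nOrd T * Nat.card (Quotient hT.setoid) := by
  rw [← Set.ncard_univ, hT.setoid.ncard_eq_mul_ncard_image (k := S.nOrd T), Set.image_univ,
    Set.range_eq_univ.2 Quotient.mk_surjective, Set.ncard_univ]
  intro z _
  simp only [Set.mem_univ, true_and]
  exact ncard_relOf_mem hT.subset_rels z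

lemma IsSymClosed.exists_nOrd_eq_pow {p : ℕ} (hp : S.IsPScheme p) (hT : S.IsSymClosed T) :
    ∃ m, S.nOrd T = p ^ m := by
  obtain ⟨n, hn⟩ := hp.2.1
  have hdvd : S.nOrd T ∣ p ^ n := by
    rw [← hn, ← Nat.card_eq_fintype_card]
    exact Dvd.intro _ hT.card_eq_nOrd_mul.symm
  obtain ⟨m, -, hm⟩ := (Nat.dvd_prime_pow hp.1).1 hdvd
  exact ⟨m, hm⟩

lemma IsSymClosed.nOrd_pos (h0 : ∅ ∉ S.rels) (hT : S.IsSymClosed T) : 0 < S.nOrd T := by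
  obtain ⟨x⟩ := nonempty_of_empty_notMem h0
  rw [← ncard_relOf_mem hT.subset_rels x]
  exact (Set.ncard_pos (Set.toFinite _)).2 ⟨x, hT.setoid.refl x⟩

lemma nOrd_lt_nOrd (h0 : ∅ ∉ S.rels) {U V : Set (Set (X × X))} (hUV : U ⊆ V)
    (hV : V ⊆ S.rels) {v : Set (X × X)} (hv : v ∈ V) (hvU : v ∉ U) : S.nOrd U < S.nOrd V := by
  rw [nOrd, nOrd, finsum_mem_eq_finite_toFinset_sum _ (Set.toFinite U),
    finsum_mem_eq_finite_toFinset_sum _ (Set.toFinite V)]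
  refine Finset.sum_lt_sum_of_subset (by simpa using hUV) (by simpa using hv) (by simpa using hvU)
    (val_pos h0 (hV hv)) fun _ _ _ => Nat.zero_le _

lemma nOrd_singleton_diag (h0 : ∅ ∉ S.rels) : S.nOrd {schemeDiag X} = 1 := by
  rw [nOrd, finsum_mem_singleton, (isThin_diag h0).2]

lemma transp_mem_cprod (h0 : ∅ ∉ S.rels) {s t w : Set (X × X)} (hs : s ∈ S.rels)
    (ht : t ∈ S.rels) (hw : w ∈ S.cprod s t) :
    schemeTransp w ∈ S.cprod (schemeTransp t) (schemeTransp s) := by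
  obtain ⟨⟨x, y⟩, hxy⟩ := nonempty_of_mem_rels h0 hw.1
  obtain ⟨z, hxz, hzy⟩ := exists_of_mem_cprod hs ht hw hxy
  exact mem_cprod (S.transpose_mem t ht) (S.transpose_mem s hs) (S.transpose_mem w hw.1)
    (show (y, x) ∈ schemeTransp w from hxy) hzy hxz

lemma resOf_subset {U : Set (Set (X × X))} (hU : S.IsClosedSubset U)
    (hsq : ∀ t ∈ T, S.cprod (schemeTransp t) t ⊆ U) : S.resOf T ⊆ U :=
  Set.sInter_subset_of_mem ⟨hU, hsq⟩

lemma cprod_subset_resOf {t : Set (X × X)} (ht : t ∈ T) :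
    S.cprod (schemeTransp t) t ⊆ S.resOf T :=
  fun _ hw _ hU => hU.2 t ht hw

lemma isSymClosed_resOf (h0 : ∅ ∉ S.rels) (hT : T ⊆ S.rels) (hne : T.Nonempty) :
    S.IsSymClosed (S.resOf T) where
  subset_rels := resOf_subset ⟨⟨_, S.diag_mem⟩, subset_rfl, fun _ _ _ _ w hw => hw.1⟩
    fun _ _ w hw => hw.1
  diag_mem := by
    obtain ⟨t, ht⟩ := hne
    obtain ⟨⟨x, y⟩, hxy⟩ := nonempty_of_mem_rels h0 (hT ht)
    exact cprod_subset_resOf ht (mem_cprod (S.transpose_mem t (hT ht)) (hT ht) S.diag_mem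
      (show (y, y) ∈ schemeDiag X from rfl) hxy hxy)
  transp_mem w hw U hU := by
    have hrels (v) (hv : schemeTransp v ∈ U) : v ∈ S.rels := S.transpose_mem _ (hU.1.2.1 hv)
    -- `{v | v* ∈ U}` is again closed and contains every `t* t`
    refine hw {v | schemeTransp v ∈ U} ⟨⟨?_, ?_, ?_⟩, ?_⟩
    · obtain ⟨u, hu⟩ := hU.1.1
      exact ⟨schemeTransp u, hu⟩
    · exact fun v hv => hrels v hv
    · exact fun a ha b hb c hc =>
        hU.1.2.2 _ hb _ ha (transp_mem_cprod h0 (hrels a ha) (hrels b hb) hc)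
    · exact fun t ht c hc =>
        hU.2 t ht (transp_mem_cprod h0 (S.transpose_mem t (hT ht)) (hT ht) hc)
  cprod_subset u hu v hv w hw U hU := hU.1.2.2 u (hu U hU) v (hv U hU) hw

section Cosets

variable {s : Set (X × X)}

lemma IsThin.mk_iterate_eq_mk_iff (h0 : ∅ ∉ S.rels) (hs : S.IsThin s) (hT : S.IsSymClosed T)
    (n : ℕ) (x : X) :
    Quotient.mk hT.setoid ((thinMap s)^[n] x) = Quotient.mk hT.setoid x ↔ relPow s n ∈ T := by
  rw [eq_comm, hT.mk_eq_mk_iff]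
  refine ⟨fun ⟨t, ht, hxt⟩ => ?_, fun h => ⟨_, h, hs.mem_relPow h0 x n⟩⟩
  rwa [eq_of_mem_of_mem (hs.pow h0 n).1 (hT.subset_rels ht) (hs.mem_relPow h0 x n) hxt]

/-- `thinMap s` permutes the classes of `hT.setoid`, and each of its powers is either trivial
or fixed-point free (`mk_iterate_eq_mk_iff`); on a prime number of classes it is transitive. -/
lemma IsThin.exists_iterate_setoid (h0 : ∅ ∉ S.rels) (hcomm : S.IsCommutative)
    (hs : S.IsThin s) (hT : S.IsSymClosed T) (hsT : s ∉ T)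
    (hQ : (Nat.card (Quotient hT.setoid)).Prime) (x y : X) :
    ∃ n, hT.setoid ((thinMap s)^[n] x) y := by
  have hmap (x y : X) : hT.setoid x y ↔ hT.setoid (thinMap s x) (thinMap s y) := by
    change S.relOf x y ∈ T ↔ S.relOf _ _ ∈ T
    rw [← eq_relOf (S.relOf_mem x y) (hs.map_mem_of_mem h0 hcomm (S.relOf_mem x y)
      (S.mem_relOf x y))]
  let σ : Equiv.Perm (Quotient hT.setoid) :=
    Quotient.congr (Equiv.ofBijective _ (hs.bijective_thinMap h0)) hmap
  have hσ (n : ℕ) (x : X) : (σ ^ n) (Quotient.mk _ x) = Quotient.mk _ ((thinMap s)^[n] x) := by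
    induction n with
    | zero => rfl
    | succ n ih => rw [pow_succ', Equiv.Perm.mul_apply, ih, Function.iterate_succ_apply']; rfl
  have hfree (n : ℕ) (c : Quotient hT.setoid) (hc : (σ ^ n) c = c) : σ ^ n = 1 := by
    induction c using Quotient.inductionOn with | h x => ?_
    rw [hσ, hs.mk_iterate_eq_mk_iff h0 hT] at hc
    exact Equiv.ext fun d => Quotient.inductionOn d fun y =>
      (hσ n y).trans ((hs.mk_iterate_eq_mk_iff h0 hT n y).2 hc)
  have hσ1 : σ ≠ 1 := by
    intro h
    have := hσ 1 x
    rw [h, one_pow, Equiv.Perm.one_apply, eq_comm, hs.mk_iterate_eq_mk_iff h0 hT] at this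
    exact hsT (relPow_one s ▸ this)
  obtain ⟨n, hn⟩ := Equiv.Perm.exists_pow_apply_eq_of_prime_card hQ hσ1 hfree
    (Quotient.mk _ x) (Quotient.mk _ y)
  exact ⟨n, Quotient.eq.1 ((hσ n x).symm.trans hn)⟩

lemma IsThin.cprod_transp_self_subset_biUnion (h0 : ∅ ∉ S.rels) (hcomm : S.IsCommutative)
    (hs : S.IsThin s) (hT : S.IsSymClosed T) (hsT : s ∉ T)
    (hQ : (Nat.card (Quotient hT.setoid)).Prime) {u : Set (X × X)} (hu : u ∈ S.rels) :
    S.cprod (schemeTransp u) u ⊆ ⋃ t ∈ T, S.cprod (schemeTransp t) t := by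
  intro w hw
  obtain ⟨⟨y, y'⟩, hyy'⟩ := nonempty_of_mem_rels h0 hw.1
  obtain ⟨x, hxy, hxy'⟩ := exists_of_mem_cprod (S.transpose_mem u hu) hu hw hyy'
  obtain ⟨n, hn⟩ := hs.exists_iterate_setoid h0 hcomm hT hsT hQ x y
  set m := (thinMap s)^[n] x
  have hxm := hs.mem_relPow h0 x n
  have hu_mem : u ∈ S.cprod (relPow s n) (S.relOf m y) :=
    mem_cprod (hs.pow h0 n).1 (S.relOf_mem m y) hu hxy hxm (S.mem_relOf m y)
  obtain ⟨m', hxm', hm'y'⟩ :=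
    exists_of_mem_cprod (hs.pow h0 n).1 (S.relOf_mem m y) hu_mem hxy'
  rw [(hs.pow h0 n).eq_of_mem hxm' hxm] at hm'y'
  exact Set.mem_biUnion hn (mem_cprod (S.transpose_mem _ (S.relOf_mem m y)) (S.relOf_mem m y)
    hw.1 hyy' (S.mem_relOf m y) hm'y')

lemma IsThin.resOf_rels_subset_resOf (h0 : ∅ ∉ S.rels) (hcomm : S.IsCommutative)
    (hs : S.IsThin s) (hT : S.IsSymClosed T) (hsT : s ∉ T)
    (hQ : (Nat.card (Quotient hT.setoid)).Prime) : S.resOf S.rels ⊆ S.resOf T := by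
  refine resOf_subset (isSymClosed_resOf h0 hT.subset_rels ⟨_, hT.diag_mem⟩).isClosedSubset
    fun u hu w hw => ?_
  obtain ⟨t, ht, hwt⟩ :=
    Set.mem_iUnion₂.1 (hs.cprod_transp_self_subset_biUnion h0 hcomm hT hsT hQ hu hw)
  exact cprod_subset_resOf ht hwt

end Cosets

lemma ncard_relOf_mem_and_relOf_mem {A B : Set (Set (X × X))} (hA : A ⊆ S.rels)
    (hB : B ⊆ S.rels) {u : Set (X × X)} (hu : u ∈ S.rels) {x y : X} (hxy : (x, y) ∈ u) :
    {z | S.relOf x z ∈ A ∧ S.relOf z y ∈ B}.ncard = ∑ᶠ st ∈ A ×ˢ B, S.a st.1 st.2 u := by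
  have hcover : {z | S.relOf x z ∈ A ∧ S.relOf z y ∈ B} =
      ⋃ st ∈ A ×ˢ B, {z | (x, z) ∈ st.1 ∧ (z, y) ∈ st.2} := by
    ext z
    simp only [Set.mem_iUnion, Set.mem_ofPred_eq, Set.mem_prod, exists_prop, Prod.exists]
    refine ⟨fun h => ⟨_, _, h, S.mem_relOf x z, S.mem_relOf z y⟩, ?_⟩
    rintro ⟨s, t, ⟨hs, ht⟩, hxz, hzy⟩
    exact ⟨eq_relOf (hA hs) hxz ▸ hs, eq_relOf (hB ht) hzy ▸ ht⟩
  have hdisj : (A ×ˢ B).PairwiseDisjoint fun st => {z | (x, z) ∈ st.1 ∧ (z, y) ∈ st.2} := by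
    rintro ⟨s, t⟩ ⟨hs, ht⟩ ⟨s', t'⟩ ⟨hs', ht'⟩ hne
    refine Set.disjoint_left.2 fun z ⟨hxz, hzy⟩ ⟨hxz', hzy'⟩ => hne ?_
    exact Prod.ext (eq_of_mem_of_mem (hA hs) (hA hs') hxz hxz')
      (eq_of_mem_of_mem (hB ht) (hB ht') hzy hzy')
  rw [hcover, Set.Finite.ncard_biUnion (Set.toFinite _) (fun _ _ => Set.toFinite _) hdisj]
  exact finsum_mem_congr rfl fun st hst => (a_eq_ncard (hA hst.1) (hB hst.2) hu hxy).symm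

section Quotient

variable {N : Set (Set (X × X))} (hN : S.IsSymClosed N)

noncomputable instance IsSymClosed.instFintypeQuotient : Fintype (Quotient hN.setoid) :=
  Fintype.ofFinite _

def quotRel (s : Set (X × X)) : Set (Quotient hN.setoid × Quotient hN.setoid) :=
  Prod.map (Quotient.mk _) (Quotient.mk _) '' s

variable {s t : Set (X × X)} {x y : X}

variable {hN} in
lemma mk_mem_quotRel (h : (x, y) ∈ s) : (Quotient.mk _ x, Quotient.mk _ y) ∈ quotRel hN s :=
  ⟨_, h, rfl⟩

lemma quotRel_transp (s : Set (X × X)) :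
    quotRel hN (schemeTransp s) = schemeTransp (quotRel hN s) := by
  ext ⟨c, d⟩
  constructor <;> rintro ⟨⟨x, y⟩, hxy, he⟩ <;> obtain ⟨rfl, rfl⟩ := Prod.ext_iff.1 he
  exacts [mk_mem_quotRel hxy, mk_mem_quotRel (s := schemeTransp s) hxy]

lemma quotRel_diag : quotRel hN (schemeDiag X) = schemeDiag (Quotient hN.setoid) := by
  ext ⟨c, d⟩
  constructor
  · rintro ⟨⟨x, _⟩, rfl : x = _, he⟩
    obtain ⟨rfl, rfl⟩ := Prod.ext_iff.1 he
    rfl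
  · rintro (rfl : c = d)
    induction c using Quotient.inductionOn with | h x => exact mk_mem_quotRel (rfl : x = x)

lemma exists_mem_of_mk_eq (h0 : ∅ ∉ S.rels) (hcomm : S.IsCommutative)
    (hNthin : ∀ n ∈ N, S.IsThin n) (hs : s ∈ S.rels) {x' : X}
    (hx : Quotient.mk hN.setoid x = Quotient.mk _ x') (hxy : (x, y) ∈ s) :
    ∃ y', (x', y') ∈ s ∧ Quotient.mk hN.setoid y' = Quotient.mk _ y := by
  have hn : S.IsThin (S.relOf x x') := hNthin _ (Quotient.eq.1 hx)
  refine ⟨thinMap (S.relOf x x') y, ?_, (hN.mk_eq_mk_iff.2 ⟨_, Quotient.eq.1 hx,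
    hn.mem_thinMap h0 y⟩).symm⟩
  have := hn.map_mem_of_mem h0 hcomm hs hxy
  rwa [(hn.mem_iff h0).1 (S.mem_relOf x x')] at this

lemma mk_mem_quotRel_iff (h0 : ∅ ∉ S.rels) (hcomm : S.IsCommutative)
    (hNthin : ∀ n ∈ N, S.IsThin n) (hs : s ∈ S.rels) :
    (Quotient.mk _ x, Quotient.mk _ y) ∈ quotRel hN s ↔
      ∃ y', (x, y') ∈ s ∧ Quotient.mk hN.setoid y' = Quotient.mk _ y := by
  refine ⟨fun ⟨⟨x₁, y₁⟩, hxy₁, he⟩ => ?_, fun ⟨y', hxy', he⟩ => he ▸ mk_mem_quotRel hxy'⟩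
  obtain ⟨hx, hy⟩ := Prod.ext_iff.1 he
  obtain ⟨y', hxy', hy'⟩ := exists_mem_of_mk_eq hN h0 hcomm hNthin hs hx hxy₁
  exact ⟨y', hxy', hy'.trans hy⟩

lemma quotRel_comp (h0 : ∅ ∉ S.rels) (hNthin : ∀ n ∈ N, S.IsThin n) {n : Set (X × X)}
    (hn : n ∈ N) : quotRel hN (s ○ n) = quotRel hN s := by
  ext q
  constructor
  · rintro ⟨⟨x, y⟩, ⟨z, hxz, hzy⟩, rfl⟩
    rw [Prod.map_apply, ← hN.mk_eq_mk_iff.2 ⟨n, hn, hzy⟩]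
    exact mk_mem_quotRel hxz
  · rintro ⟨⟨x, y⟩, hxy, rfl⟩
    rw [Prod.map_apply, hN.mk_eq_mk_iff.2 ⟨n, hn, (hNthin n hn).mem_thinMap h0 y⟩]
    exact mk_mem_quotRel ⟨y, hxy, (hNthin n hn).mem_thinMap h0 y⟩

lemma quotRel_eq_of_mem (h0 : ∅ ∉ S.rels) (hcomm : S.IsCommutative)
    (hNthin : ∀ n ∈ N, S.IsThin n) (hs : s ∈ S.rels) (ht : t ∈ S.rels)
    {q : Quotient hN.setoid × Quotient hN.setoid} (hqs : q ∈ quotRel hN s)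
    (hqt : q ∈ quotRel hN t) : quotRel hN s = quotRel hN t := by
  obtain ⟨⟨x, y⟩, hxy, rfl⟩ := hqs
  obtain ⟨y', hxy', hy'⟩ := (mk_mem_quotRel_iff hN h0 hcomm hNthin ht).1 hqt
  have hn : S.relOf y y' ∈ N := Quotient.eq.1 hy'.symm
  rw [eq_of_mem_of_mem ht ((hNthin _ hn).comp_mem_rels h0 hs) hxy' ⟨y, hxy, S.mem_relOf y y'⟩,
    quotRel_comp hN h0 hNthin hn]

lemma mk_mem_quotRel_iff_relOf (h0 : ∅ ∉ S.rels) (hcomm : S.IsCommutative)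
    (hNthin : ∀ n ∈ N, S.IsThin n) (hs : s ∈ S.rels) :
    (Quotient.mk _ x, Quotient.mk _ y) ∈ quotRel hN s ↔
      quotRel hN (S.relOf x y) = quotRel hN s :=
  ⟨quotRel_eq_of_mem hN h0 hcomm hNthin (S.relOf_mem x y) hs (mk_mem_quotRel (S.mem_relOf x y)),
    fun h => h ▸ mk_mem_quotRel (S.mem_relOf x y)⟩

lemma mem_of_quotRel_eq (h0 : ∅ ∉ S.rels) (hcomm : S.IsCommutative)
    (hNthin : ∀ n ∈ N, S.IsThin n) {V : Set (Set (X × X))} (hV : S.IsSymClosed V)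
    (hNV : N ⊆ V) {v : Set (X × X)} (hv : v ∈ V) (hs : s ∈ S.rels)
    (h : quotRel hN s = quotRel hN v) : s ∈ V := by
  obtain ⟨⟨x, y⟩, hxy⟩ := nonempty_of_mem_rels h0 hs
  have := h ▸ mk_mem_quotRel (hN := hN) hxy
  obtain ⟨y', hxy', hy'⟩ := (mk_mem_quotRel_iff hN h0 hcomm hNthin (hV.subset_rels hv)).1 this
  have hn : S.relOf y' y ∈ N := Quotient.eq.1 hy'
  exact hV.cprod_subset v hv _ (hNV hn)
    (mem_cprod (hV.subset_rels hv) (S.relOf_mem y' y) hs hxy hxy' (S.mem_relOf y' y))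

lemma nOrd_mul_ncard_quot (h0 : ∅ ∉ S.rels) (hcomm : S.IsCommutative)
    (hNthin : ∀ n ∈ N, S.IsThin n) (hs : s ∈ S.rels) (ht : t ∈ S.rels) {u : Set (X × X)}
    (hu : u ∈ S.rels) (hxy : (x, y) ∈ u) :
    S.nOrd N * {c | (Quotient.mk _ x, c) ∈ quotRel hN s ∧ (c, Quotient.mk _ y) ∈ quotRel hN t}.ncard
      = ∑ᶠ st ∈ {s' ∈ S.rels | quotRel hN s' = quotRel hN s} ×ˢ
          {t' ∈ S.rels | quotRel hN t' = quotRel hN t}, S.a st.1 st.2 u := by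
  -- the `z` form a union of `N`-classes, and split according to `(r(x, z), r(z, y))`
  set Z : Set X := {z | (Quotient.mk _ x, Quotient.mk _ z) ∈ quotRel hN s ∧
    (Quotient.mk _ z, Quotient.mk _ y) ∈ quotRel hN t}
  have hZ (z z' : X) (hzz' : hN.setoid z z') (hz : z ∈ Z) : z' ∈ Z := by
    rwa [Set.mem_ofPred_eq, ← Quotient.sound hzz']
  have hZ_eq : Z = {z | S.relOf x z ∈ {s' ∈ S.rels | quotRel hN s' = quotRel hN s} ∧
      S.relOf z y ∈ {t' ∈ S.rels | quotRel hN t' = quotRel hN t}} := by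
    ext z
    simp only [Z, Set.mem_ofPred_eq, S.relOf_mem, true_and,
      mk_mem_quotRel_iff_relOf hN h0 hcomm hNthin hs,
      mk_mem_quotRel_iff_relOf hN h0 hcomm hNthin ht]
  have himage : Quotient.mk _ '' Z =
      {c | (Quotient.mk _ x, c) ∈ quotRel hN s ∧ (c, Quotient.mk _ y) ∈ quotRel hN t} := by
    ext c
    induction c using Quotient.inductionOn with | h z => ?_
    exact ⟨fun ⟨z', hz', he⟩ => hZ z' z (Quotient.eq.1 he) hz', fun hz => ⟨z, hz, rfl⟩⟩
  rw [← ncard_relOf_mem_and_relOf_mem (fun _ h => h.1) (fun _ h => h.1) hu hxy, ← hZ_eq,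
    hN.setoid.ncard_eq_mul_ncard_image (k := S.nOrd N), himage]
  intro z hz
  rw [← ncard_relOf_mem hN.subset_rels z]
  congr 1
  ext z'
  exact ⟨fun h => h.2, fun h => ⟨hZ z z' h hz, h⟩⟩

lemma ncard_quot_eq_of_mem (h0 : ∅ ∉ S.rels) (hcomm : S.IsCommutative)
    (hNthin : ∀ n ∈ N, S.IsThin n) (hs : s ∈ S.rels) (ht : t ∈ S.rels) {u : Set (X × X)}
    (hu : u ∈ S.rels) {q q' : Quotient hN.setoid × Quotient hN.setoid} (hq : q ∈ quotRel hN u)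
    (hq' : q' ∈ quotRel hN u) :
    {c | (q.1, c) ∈ quotRel hN s ∧ (c, q.2) ∈ quotRel hN t}.ncard =
      {c | (q'.1, c) ∈ quotRel hN s ∧ (c, q'.2) ∈ quotRel hN t}.ncard := by
  obtain ⟨⟨x, y⟩, hxy, rfl⟩ := hq
  obtain ⟨⟨x', y'⟩, hxy', rfl⟩ := hq'
  refine Nat.eq_of_mul_eq_mul_left (hN.nOrd_pos h0) ?_
  rw [Prod.map_apply, Prod.map_apply, nOrd_mul_ncard_quot hN h0 hcomm hNthin hs ht hu hxy,
    nOrd_mul_ncard_quot hN h0 hcomm hNthin hs ht hu hxy']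

open Classical in
noncomputable def quotScheme (h0 : ∅ ∉ S.rels) (hcomm : S.IsCommutative)
    (hNthin : ∀ n ∈ N, S.IsThin n) : AssocScheme (Quotient hN.setoid) where
  rels := quotRel hN '' S.rels
  partition := by
    rintro ⟨c, d⟩
    induction c, d using Quotient.inductionOn₂ with | h x y => ?_
    refine ⟨quotRel hN (S.relOf x y), ⟨⟨_, S.relOf_mem x y, rfl⟩, mk_mem_quotRel (S.mem_relOf x y)⟩,
      ?_⟩
    rintro _ ⟨⟨s, hs, rfl⟩, hxy⟩
    exact quotRel_eq_of_mem hN h0 hcomm hNthin hs (S.relOf_mem x y) hxy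
      (mk_mem_quotRel (S.mem_relOf x y))
  diag_mem := ⟨_, S.diag_mem, quotRel_diag hN⟩
  transpose_mem := by
    rintro _ ⟨s, hs, rfl⟩
    exact ⟨_, S.transpose_mem s hs, quotRel_transp hN s⟩
  a A B C := if h : C.Nonempty then {c | (h.some.1, c) ∈ A ∧ (c, h.some.2) ∈ B}.ncard else 0
  a_spec := by
    rintro _ ⟨s, hs, rfl⟩ _ ⟨t, ht, rfl⟩ _ ⟨u, hu, rfl⟩ c d hcd
    have hne : (quotRel hN u).Nonempty := ⟨_, hcd⟩
    rw [dif_pos hne, Nat.card_coe_set_eq]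
    exact ncard_quot_eq_of_mem hN h0 hcomm hNthin hs ht hu hne.some_mem hcd

lemma quotRel_mem_quotScheme (h0 : ∅ ∉ S.rels) (hcomm : S.IsCommutative)
    (hNthin : ∀ n ∈ N, S.IsThin n) (hs : s ∈ S.rels) :
    quotRel hN s ∈ (S.quotScheme hN h0 hcomm hNthin).rels :=
  ⟨s, hs, rfl⟩

lemma nOrd_mul_quotScheme_a (h0 : ∅ ∉ S.rels) (hcomm : S.IsCommutative)
    (hNthin : ∀ n ∈ N, S.IsThin n) (hs : s ∈ S.rels) (ht : t ∈ S.rels) {u : Set (X × X)}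
    (hu : u ∈ S.rels) (hxy : (x, y) ∈ u) :
    S.nOrd N * (S.quotScheme hN h0 hcomm hNthin).a (quotRel hN s) (quotRel hN t) (quotRel hN u)
      = ∑ᶠ st ∈ {s' ∈ S.rels | quotRel hN s' = quotRel hN s} ×ˢ
          {t' ∈ S.rels | quotRel hN t' = quotRel hN t}, S.a st.1 st.2 u := by
  rw [a_eq_ncard (quotRel_mem_quotScheme hN h0 hcomm hNthin hs)
    (quotRel_mem_quotScheme hN h0 hcomm hNthin ht) (quotRel_mem_quotScheme hN h0 hcomm hNthin hu)
    (mk_mem_quotRel hxy), nOrd_mul_ncard_quot hN h0 hcomm hNthin hs ht hu hxy]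

lemma isCommutative_quotScheme (h0 : ∅ ∉ S.rels) (hcomm : S.IsCommutative)
    (hNthin : ∀ n ∈ N, S.IsThin n) : (S.quotScheme hN h0 hcomm hNthin).IsCommutative := by
  rintro _ ⟨s, hs, rfl⟩ _ ⟨t, ht, rfl⟩ _ ⟨u, hu, rfl⟩
  obtain ⟨⟨x, y⟩, hxy⟩ := nonempty_of_mem_rels h0 hu
  refine Nat.eq_of_mul_eq_mul_left (hN.nOrd_pos h0) ?_
  rw [nOrd_mul_quotScheme_a hN h0 hcomm hNthin hs ht hu hxy,
    nOrd_mul_quotScheme_a hN h0 hcomm hNthin ht hs hu hxy, ← Set.image_swap_prod,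
    finsum_mem_image Prod.swap_injective.injOn]
  exact finsum_mem_congr rfl fun st hst => hcomm _ hst.2.1 _ hst.1.1 u hu

lemma quotScheme_val_dvd (h0 : ∅ ∉ S.rels) (hcomm : S.IsCommutative)
    (hNthin : ∀ n ∈ N, S.IsThin n) (hs : s ∈ S.rels) :
    (S.quotScheme hN h0 hcomm hNthin).val (quotRel hN s) ∣ S.val s := by
  obtain ⟨x⟩ := nonempty_of_empty_notMem h0
  have himage : Quotient.mk hN.setoid '' {y | (x, y) ∈ s} =
      {c | (Quotient.mk _ x, c) ∈ quotRel hN s} := by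
    ext c
    induction c using Quotient.inductionOn with | h y => ?_
    exact (mk_mem_quotRel_iff hN h0 hcomm hNthin hs).symm
  rw [val_eq_ncard (quotRel_mem_quotScheme hN h0 hcomm hNthin hs) (Quotient.mk _ x), ← himage,
    val_eq_ncard hs x, hN.setoid.ncard_eq_mul_ncard_image
      (k := ∑ᶠ st ∈ N ×ˢ {schemeTransp s}, S.a st.1 st.2 (schemeTransp s))]
  · exact Dvd.intro_left _ rfl
  intro y hy
  rw [← ncard_relOf_mem_and_relOf_mem hN.subset_rels
    (Set.singleton_subset_iff.2 (S.transpose_mem s hs)) (S.transpose_mem s hs)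
    (show (y, x) ∈ schemeTransp s from hy)]
  congr 1
  ext y'
  simp only [Set.mem_ofPred_eq, Set.mem_singleton_iff]
  refine ⟨fun ⟨hxy', hyy'⟩ => ⟨hyy', ?_⟩, fun ⟨hyy', he⟩ => ⟨?_, hyy'⟩⟩
  · exact (eq_relOf (S.transpose_mem s hs) (show (y', x) ∈ schemeTransp s from hxy')).symm
  · exact (show (y', x) ∈ schemeTransp s from he ▸ S.mem_relOf y' x)

lemma isPScheme_quotScheme {p : ℕ} (hp : S.IsPScheme p) (hcomm : S.IsCommutative)
    (hNthin : ∀ n ∈ N, S.IsThin n) :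
    (S.quotScheme hN hp.empty_notMem hcomm hNthin).IsPScheme p := by
  have pow_of_dvd {m n : ℕ} (h : m ∣ p ^ n) : ∃ i, m = p ^ i :=
    let ⟨i, _, hi⟩ := (Nat.dvd_prime_pow hp.1).1 h
    ⟨i, hi⟩
  refine ⟨hp.1, ?_, ?_⟩
  · obtain ⟨n, hn⟩ := hp.2.1
    rw [← Nat.card_eq_fintype_card]
    refine pow_of_dvd (n := n) ?_
    rw [← hn, ← Nat.card_eq_fintype_card, hN.card_eq_nOrd_mul]
    exact Dvd.intro_left _ rfl
  · rintro _ ⟨s, hs, rfl⟩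
    obtain ⟨i, hi⟩ := hp.2.2 s hs
    exact pow_of_dvd (hi ▸ quotScheme_val_dvd hN hp.empty_notMem hcomm hNthin hs)

lemma quotRel_mem_cprod (h0 : ∅ ∉ S.rels) (hcomm : S.IsCommutative)
    (hNthin : ∀ n ∈ N, S.IsThin n) {u v w : Set (X × X)} (hu : u ∈ S.rels) (hv : v ∈ S.rels)
    (hw : w ∈ S.cprod u v) :
    quotRel hN w ∈ (S.quotScheme hN h0 hcomm hNthin).cprod (quotRel hN u) (quotRel hN v) := by
  obtain ⟨⟨x, y⟩, hxy⟩ := nonempty_of_mem_rels h0 hw.1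
  obtain ⟨z, hxz, hzy⟩ := exists_of_mem_cprod hu hv hw hxy
  exact mem_cprod (quotRel_mem_quotScheme hN h0 hcomm hNthin hu)
    (quotRel_mem_quotScheme hN h0 hcomm hNthin hv) (quotRel_mem_quotScheme hN h0 hcomm hNthin hw.1)
    (mk_mem_quotRel hxy) (mk_mem_quotRel hxz) (mk_mem_quotRel hzy)

lemma isSymClosed_image_quotRel (h0 : ∅ ∉ S.rels) (hcomm : S.IsCommutative)
    (hNthin : ∀ n ∈ N, S.IsThin n) {V : Set (Set (X × X))} (hV : S.IsSymClosed V) :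
    (S.quotScheme hN h0 hcomm hNthin).IsSymClosed (quotRel hN '' V) where
  subset_rels := Set.image_mono hV.subset_rels
  diag_mem := ⟨_, hV.diag_mem, quotRel_diag hN⟩
  transp_mem := by
    rintro _ ⟨v, hv, rfl⟩
    exact ⟨_, hV.transp_mem v hv, quotRel_transp hN v⟩
  cprod_subset := by
    rintro _ ⟨u, hu, rfl⟩ _ ⟨v, hv, rfl⟩ C hC
    obtain ⟨w, hw, rfl⟩ := hC.1
    obtain ⟨⟨x, y⟩, hxy⟩ := nonempty_of_mem_rels h0 hw
    obtain ⟨c, hxc, hcy⟩ := exists_of_mem_cprod (quotRel_mem_quotScheme hN h0 hcomm hNthin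
      (hV.subset_rels hu)) (quotRel_mem_quotScheme hN h0 hcomm hNthin (hV.subset_rels hv)) hC
      (mk_mem_quotRel (hN := hN) hxy)
    induction c using Quotient.inductionOn with | h z => ?_
    obtain ⟨z', hxz', hz'⟩ := (mk_mem_quotRel_iff hN h0 hcomm hNthin (hV.subset_rels hu)).1 hxc
    obtain ⟨y', hzy', hy'⟩ := (mk_mem_quotRel_iff hN h0 hcomm hNthin (hV.subset_rels hv)).1
      (hz'.symm ▸ hcy)
    refine ⟨S.relOf x y', hV.cprod_subset u hu v hv
      (relOf_mem_cprod (hV.subset_rels hu) (hV.subset_rels hv) hxz' hzy'), ?_⟩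
    exact quotRel_eq_of_mem hN h0 hcomm hNthin (S.relOf_mem x y') hw
      (hy' ▸ mk_mem_quotRel (S.mem_relOf x y')) (mk_mem_quotRel hxy)

lemma isSymClosed_preimage_quotRel (h0 : ∅ ∉ S.rels) (hcomm : S.IsCommutative)
    (hNthin : ∀ n ∈ N, S.IsThin n) {V : Set (Set (X × X))} (hV : S.IsSymClosed V)
    {U : Set (Set (Quotient hN.setoid × Quotient hN.setoid))}
    (hU : (S.quotScheme hN h0 hcomm hNthin).IsSymClosed U) :
    S.IsSymClosed {v ∈ V | quotRel hN v ∈ U} where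
  subset_rels _ hv := hV.subset_rels hv.1
  diag_mem := ⟨hV.diag_mem, quotRel_diag hN ▸ hU.diag_mem⟩
  transp_mem t ht := ⟨hV.transp_mem t ht.1, quotRel_transp hN t ▸ hU.transp_mem _ ht.2⟩
  cprod_subset u hu v hv _ hw := ⟨hV.cprod_subset u hu.1 v hv.1 hw, hU.cprod_subset _ hu.2 _ hv.2
    (quotRel_mem_cprod hN h0 hcomm hNthin (hV.subset_rels hu.1) (hV.subset_rels hv.1) hw)⟩

lemma nOrd_eq_mul_nOrd_image_quotRel (h0 : ∅ ∉ S.rels) (hcomm : S.IsCommutative)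
    (hNthin : ∀ n ∈ N, S.IsThin n) {V : Set (Set (X × X))} (hV : S.IsSymClosed V)
    (hNV : N ⊆ V) :
    S.nOrd V = S.nOrd N * (S.quotScheme hN h0 hcomm hNthin).nOrd (quotRel hN '' V) := by
  obtain ⟨x⟩ := nonempty_of_empty_notMem h0
  have hmem (y : X) : S.relOf x y ∈ V ↔ (S.quotScheme hN h0 hcomm hNthin).relOf
      (Quotient.mk _ x) (Quotient.mk _ y) ∈ quotRel hN '' V := by
    rw [← eq_relOf (quotRel_mem_quotScheme hN h0 hcomm hNthin (S.relOf_mem x y))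
      (mk_mem_quotRel (S.mem_relOf x y))]
    exact ⟨fun h => ⟨_, h, rfl⟩, fun ⟨v, hv, he⟩ =>
      mem_of_quotRel_eq hN h0 hcomm hNthin hV hNV hv (S.relOf_mem x y) he.symm⟩
  have himage : Quotient.mk hN.setoid '' {y | S.relOf x y ∈ V} =
      {c | (S.quotScheme hN h0 hcomm hNthin).relOf (Quotient.mk _ x) c ∈ quotRel hN '' V} := by
    ext c
    induction c using Quotient.inductionOn with | h y => ?_
    exact ⟨fun ⟨y', hy', he⟩ => he ▸ (hmem y').1 hy', fun h => ⟨y, (hmem y).2 h, rfl⟩⟩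
  rw [← ncard_relOf_mem hV.subset_rels x, ← ncard_relOf_mem
    (isSymClosed_image_quotRel hN h0 hcomm hNthin hV).subset_rels (Quotient.mk _ x), ← himage]
  refine hN.setoid.ncard_eq_mul_ncard_image fun y hy => ?_
  rw [← ncard_relOf_mem hN.subset_rels y]
  congr 1
  ext y'
  refine ⟨fun h => h.2, fun h => ⟨?_, h⟩⟩
  exact hV.cprod_subset _ hy _ (hNV h)
    (relOf_mem_cprod (S.relOf_mem x y) (S.relOf_mem y y') (S.mem_relOf x y) (S.mem_relOf y y'))

end Quotient

section Residue

variable {V : Set (Set (X × X))}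

variable (S) in
def thinPart (V : Set (Set (X × X))) : Set (Set (X × X)) := {v ∈ V | S.val v = 1}

lemma IsSymClosed.thinPart (h0 : ∅ ∉ S.rels) (hV : S.IsSymClosed V) :
    S.IsSymClosed (S.thinPart V) where
  subset_rels _ hv := hV.subset_rels hv.1
  diag_mem := ⟨hV.diag_mem, (isThin_diag h0).2⟩
  transp_mem t ht := ⟨hV.transp_mem t ht.1, (IsThin.transp h0 ⟨hV.subset_rels ht.1, ht.2⟩).2⟩
  cprod_subset u hu v hv w hw := by
    have hv' : S.IsThin v := ⟨hV.subset_rels hv.1, hv.2⟩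
    rw [hv'.cprod_eq_singleton_comp h0 (hV.subset_rels hu.1), Set.mem_singleton_iff] at hw
    exact hw ▸ ⟨hV.cprod_subset u hu.1 v hv.1 (hv'.comp_mem_cprod h0 (hV.subset_rels hu.1)),
      (IsThin.comp h0 ⟨hV.subset_rels hu.1, hu.2⟩ hv').2⟩

/-- Counting valencies mod `p`: the non-thin relations of `V` contribute a multiple of `p`. -/
lemma IsSymClosed.one_lt_nOrd_thinPart {p : ℕ} (hp : S.IsPScheme p) (hV : S.IsSymClosed V)
    (hV1 : 1 < S.nOrd V) : 1 < S.nOrd (S.thinPart V) := by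
  have hsplit : S.nOrd V = S.nOrd (S.thinPart V) + S.nOrd (V \ S.thinPart V) := by
    rw [nOrd, nOrd, nOrd, ← finsum_mem_union Set.disjoint_sdiff_right (Set.toFinite _)
      (Set.toFinite _), Set.union_sdiff_cancel (show S.thinPart V ⊆ V from Set.sep_subset _ _)]
  have hV_dvd : p ∣ S.nOrd V := by
    obtain ⟨m, hm⟩ := hV.exists_nOrd_eq_pow hp
    rw [hm] at hV1 ⊢
    exact dvd_pow_self p (by rintro rfl; simp at hV1)
  have hrest_dvd : p ∣ S.nOrd (V \ S.thinPart V) := by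
    refine finsum_mem_induction (p ∣ ·) (dvd_zero p) (fun _ _ => dvd_add) fun v hv => ?_
    obtain ⟨i, hi⟩ := hp.2.2 v (hV.subset_rels hv.1)
    rw [hi]
    exact dvd_pow_self p (by rintro rfl; exact hv.2 ⟨hv.1, hi⟩)
  have hthin_dvd : p ∣ S.nOrd (S.thinPart V) := by
    rw [hsplit] at hV_dvd
    exact (Nat.dvd_add_left hrest_dvd).1 hV_dvd
  exact hp.1.one_lt.trans_le (Nat.le_of_dvd ((hV.thinPart hp.empty_notMem).nOrd_pos
    hp.empty_notMem) hthin_dvd)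

lemma IsSymClosed.exists_ssubset_of_forall_isThin (h0 : ∅ ∉ S.rels) (hV : S.IsSymClosed V)
    (hV1 : 1 < S.nOrd V) (hthin : ∀ v ∈ V, S.IsThin v) :
    ∃ U, S.IsSymClosed U ∧ U ⊂ V ∧ ∀ v ∈ V, S.cprod (schemeTransp v) v ⊆ U := by
  refine ⟨{schemeDiag X}, isSymClosed_singleton_diag h0, Set.ssubset_iff_subset_ne.2
    ⟨Set.singleton_subset_iff.2 hV.diag_mem, fun he => ?_⟩, fun v hv => ?_⟩
  · rw [← he, nOrd_singleton_diag h0] at hV1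
    exact lt_irrefl 1 hV1
  · rw [(hthin v hv).cprod_eq_singleton_comp h0 (S.transpose_mem v (hthin v hv).1),
      (hthin v hv).transp_comp_self h0]

lemma IsSymClosed.card_quotient_lt (h0 : ∅ ∉ S.rels) (hT : S.IsSymClosed T)
    (hT1 : 1 < S.nOrd T) : Fintype.card (Quotient hT.setoid) < Fintype.card X := by
  obtain ⟨x⟩ := nonempty_of_empty_notMem h0
  rw [← Nat.card_eq_fintype_card, ← Nat.card_eq_fintype_card, hT.card_eq_nOrd_mul]
  exact lt_mul_left (Nat.card_pos_iff.2 ⟨⟨Quotient.mk _ x⟩, inferInstance⟩) hT1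

lemma exists_ssubset_of_quotScheme {N : Set (Set (X × X))} (hN : S.IsSymClosed N)
    (h0 : ∅ ∉ S.rels) (hcomm : S.IsCommutative) (hNthin : ∀ n ∈ N, S.IsThin n)
    (hV : S.IsSymClosed V) {U : Set (Set (Quotient hN.setoid × Quotient hN.setoid))}
    (hU : (S.quotScheme hN h0 hcomm hNthin).IsSymClosed U) (hUV : U ⊂ quotRel hN '' V)
    (hsq : ∀ v ∈ quotRel hN '' V,
      (S.quotScheme hN h0 hcomm hNthin).cprod (schemeTransp v) v ⊆ U) :
    ∃ U, S.IsSymClosed U ∧ U ⊂ V ∧ ∀ v ∈ V, S.cprod (schemeTransp v) v ⊆ U := by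
  refine ⟨{v ∈ V | quotRel hN v ∈ U}, isSymClosed_preimage_quotRel hN h0 hcomm hNthin hV hU,
    Set.ssubset_iff_subset_ne.2 ⟨Set.sep_subset _ _, fun he => hUV.not_subset ?_⟩,
    fun v hv w hw => ⟨hV.cprod_subset _ (hV.transp_mem v hv) v hv hw, ?_⟩⟩
  · rintro _ ⟨v, hv, rfl⟩
    exact (he.symm ▸ hv : v ∈ {v ∈ V | quotRel hN v ∈ U}).2
  · refine hsq _ ⟨v, hv, rfl⟩ ?_
    rw [← quotRel_transp hN v]
    exact quotRel_mem_cprod hN h0 hcomm hNthin (S.transpose_mem v (hV.subset_rels hv))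
      (hV.subset_rels hv) hw

/-- Induction on `|X|`: unless `V` is thin, pass to the quotient by its thin part. -/
theorem IsSymClosed.exists_ssubset {p : ℕ} (hp : S.IsPScheme p) (hcomm : S.IsCommutative)
    (hV : S.IsSymClosed V) (hV1 : 1 < S.nOrd V) :
    ∃ U, S.IsSymClosed U ∧ U ⊂ V ∧ ∀ v ∈ V, S.cprod (schemeTransp v) v ⊆ U := by
  induction hX : Fintype.card X using Nat.strong_induction_on generalizing X with
  | _ n ih => ?_
  have h0 := hp.empty_notMem
  have hN := hV.thinPart h0
  have hNthin : ∀ v ∈ S.thinPart V, S.IsThin v := fun v hv => ⟨hV.subset_rels hv.1, hv.2⟩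
  by_cases hVN : V ⊆ S.thinPart V
  · exact hV.exists_ssubset_of_forall_isThin h0 hV1 fun v hv => hNthin v (hVN hv)
  obtain ⟨v₀, hv₀, hv₀N⟩ := Set.not_subset.1 hVN
  have hN1 := hV.one_lt_nOrd_thinPart hp hV1
  have hQV1 : 1 < (S.quotScheme hN h0 hcomm hNthin).nOrd (quotRel hN '' V) := by
    have hord := nOrd_eq_mul_nOrd_image_quotRel hN h0 hcomm hNthin hV (Set.sep_subset _ _)
    have hlt : S.nOrd (S.thinPart V) < S.nOrd V :=
      nOrd_lt_nOrd h0 (Set.sep_subset _ _) hV.subset_rels hv₀ hv₀N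
    by_contra! h
    have := Nat.mul_le_mul_left (S.nOrd (S.thinPart V)) h
    omega
  obtain ⟨U, hU, hUV, hsq⟩ := ih _ (hX ▸ hN.card_quotient_lt h0 hN1)
    (isPScheme_quotScheme hN hp hcomm hNthin) (isCommutative_quotScheme hN h0 hcomm hNthin)
    (isSymClosed_image_quotRel hN h0 hcomm hNthin hV) hQV1 rfl
  exact exists_ssubset_of_quotScheme hN h0 hcomm hNthin hV hU hUV hsq

theorem IsSymClosed.resOf_ssubset {p : ℕ} (hp : S.IsPScheme p) (hcomm : S.IsCommutative)
    (hV : S.IsSymClosed V) (hV1 : 1 < S.nOrd V) : S.resOf V ⊂ V :=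
  let ⟨_, hU, hUV, hsq⟩ := hV.exists_ssubset hp hcomm hV1
  (resOf_subset hU.isClosedSubset hsq).trans_ssubset hUV

end Residue

end AssocScheme

theorem stmt12_general {X : Type*} [Fintype X] (S : AssocScheme X) (p : ℕ)
    (hp : S.IsPScheme p) (hcomm : S.IsCommutative)
    (hcard : Fintype.card X = p ^ 4)
    (hres : S.nOrd S.thinResidue = p ^ 3) :
    S.thinRadical ⊆ S.thinResidue := by
  intro s hs
  by_contra hsT
  have h0 := hp.empty_notMem
  have hT : S.IsSymClosed S.thinResidue :=
    AssocScheme.isSymClosed_resOf h0 subset_rfl ⟨_, S.diag_mem⟩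
  have hindex : Nat.card (Quotient hT.setoid) = p := by
    have := hT.card_eq_nOrd_mul
    rw [Nat.card_eq_fintype_card, hcard, hres, pow_succ] at this
    exact (Nat.eq_of_mul_eq_mul_left (pow_pos hp.1.pos 3) this).symm
  have hsub : S.thinResidue ⊆ S.resOf S.thinResidue :=
    AssocScheme.IsThin.resOf_rels_subset_resOf h0 hcomm hs hT hsT (hindex ▸ hp.1)
  have hT1 : 1 < S.nOrd S.thinResidue := hres ▸ Nat.one_lt_pow (by norm_num) hp.1.one_lt
  exact (hT.resOf_ssubset hp hcomm hT1).not_subset hsub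

/-- for a commutative p-scheme of order `p^4` with `n_{O_θ(S)} = p^2`
and `n_{O^θ(S)} = p^3`, the thin radical is contained in the thin residue. -/
theorem stmt12 {X : Type*} [Fintype X] (S : AssocScheme X) (p : ℕ)
    (hp : S.IsPScheme p) (hcomm : S.IsCommutative)
    (hcard : Fintype.card X = p ^ 4)
    (hrad : S.nOrd S.thinRadical = p ^ 2)
    (hres : S.nOrd S.thinResidue = p ^ 3) :
    S.thinRadical ⊆ S.thinResidue :=
  stmt12_general S p hp hcomm hcard hres
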